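/- If A and B are nonempty compact subsets of a Hausdorff topological group G satisfying A·A = A, B·B = B, A·B = A, and B·A = B, then A = B. In particular, the semigroup exp(G) of nonempty compact subsets of G contains no semigroup of left zeros with more than one element. -/

import Mathlib

open Set Pointwise

/-!
A nonempty compact subsemigroup of a Hausdorff topological group contains an idempotent
(Ellis–Numakura), and the only idempotent of a group is `1`; so `1 ∈ A` and `1 ∈ B`.
Then `A ⊆ B * A = B` and `B ⊆ A * B = A`.
-/

theorem Set.one_mem_of_isCompact_of_mul_subset {G : Type*} [Group G] [TopologicalSpace G]
    [SeparatelyContinuousMul G] [T2Space G] {S : Set G} (hne : S.Nonempty) (hc : IsCompact S)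
    (hmul : S * S ⊆ S) : (1 : G) ∈ S := by
  obtain ⟨e, he, hee⟩ := exists_idempotent_in_compact_subsemigroup
    (fun _ => SeparatelyContinuousMul.continuous_mul_const) S hne hc
    (fun _ hx _ hy => hmul (mul_mem_mul hx hy))
  rwa [← mul_eq_left.mp hee]

/-- If `A` and `B` are nonempty compact subsets of a Hausdorff topological group with
`A * A = A`, `B * B = B`, `A * B = A` and `B * A = B`, then `A = B`; in particular `exp G`
contains no semigroup of left zeros with more than one element. -/
theorem no_left_zeros {G : Type*} [Group G] [TopologicalSpace G] [IsTopologicalGroup G]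
    [T2Space G] {A B : Set G} (hAne : A.Nonempty) (hAc : IsCompact A) (hBne : B.Nonempty)
    (hBc : IsCompact B) (hA : A * A = A) (hB : B * B = B) (hAB : A * B = A)
    (hBA : B * A = B) : A = B := by
  have h1A : (1 : G) ∈ A := one_mem_of_isCompact_of_mul_subset hAne hAc hA.subset
  have h1B : (1 : G) ∈ B := one_mem_of_isCompact_of_mul_subset hBne hBc hB.subset
  apply Subset.antisymm
  · exact hBA ▸ subset_mul_right A h1B
  · exact hAB ▸ subset_mul_right B h1A
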